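/- arXiv:2402.16812 — 7 statements merged into one kernel-verified Lean document; each statement's English description precedes it below -/
import Mathlib

section
/- Let (X,d) be a metric space and μ a Borel measure on X such that v₀ rⁿ ≤ μ(B_r(x)) ≤ V₀ rⁿ for every x ∈ X and every r > 0, where n ≥ 1 is an integer and 0 < v₀ ≤ V₀. Fix p ∈ X, R > 0, Q > 1 and α with 0 < α ≤ min{2, (Q−1)/4}. Then the annulus B_{QR}(p) \ closure(B_R(p)) can be covered by finitely many balls of radius αR with centers in B_{QR}(p) \ closure(B_R(p)), and the number l of balls can be taken to satisfy l ≤ v₀^{−1} (2/α)ⁿ [V₀ (Q + α/2)ⁿ − v₀ (1 − α/2)ⁿ]. -/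
/-!
Take a maximal `αR`-separated subset of the annulus; by maximality the balls of radius `αR`
around its points cover the annulus. The balls of radius `αR/2` around these points are
disjoint and lie in `B_{(Q+α/2)R}(p) \ B_{(1-α/2)R}(p)`, so the lower volume bound for each of
them against the upper bound for the outer ball minus the lower bound for the inner ball bounds
their number. The same bound on every separated subset guarantees that a maximal one exists.
-/

open Metric MeasureTheory Set

open scoped ENNReal

theorem Finset.exists_card_maximal_of_card_le {α : Type*} {P : Finset α → Prop} {N : ℕ}
    (hP : ∃ s, P s) (hN : ∀ s, P s → s.card ≤ N) :
    ∃ s, P s ∧ ∀ t, P t → t.card ≤ s.card := by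
  classical
  let Q : ℕ → Prop := fun k => ∃ s, P s ∧ s.card = k
  obtain ⟨s₀, hs₀⟩ := hP
  obtain ⟨s, hs, hcard⟩ : Q (Nat.findGreatest Q N) :=
    Nat.findGreatest_spec (hN s₀ hs₀) ⟨s₀, hs₀, rfl⟩
  exact ⟨s, hs, fun t ht => hcard ▸ Nat.le_findGreatest (hN t ht) ⟨t, ht, rfl⟩⟩

theorem exists_separated_finset_subset_iUnion_ball {X : Type*} [PseudoMetricSpace X]
    {A : Set X} {δ : ℝ} {N : ℕ} (hδ : 0 < δ)
    (hN : ∀ s : Finset X, ↑s ⊆ A → (s : Set X).Pairwise (δ ≤ dist · ·) → s.card ≤ N) :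
    ∃ s : Finset X, ↑s ⊆ A ∧ (s : Set X).Pairwise (δ ≤ dist · ·) ∧
      A ⊆ ⋃ c ∈ s, ball c δ := by
  classical
  obtain ⟨s, ⟨hsA, hsep⟩, hmax⟩ :=
    Finset.exists_card_maximal_of_card_le (P := fun s : Finset X =>
      ↑s ⊆ A ∧ (s : Set X).Pairwise (δ ≤ dist · ·)) ⟨∅, by simp⟩ fun s hs => hN s hs.1 hs.2
  refine ⟨s, hsA, hsep, fun x hxA => ?_⟩
  by_contra hx
  simp only [mem_iUnion, mem_ball, exists_prop, not_exists, not_and, not_lt] at hx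
  have hxs : x ∉ s := fun h => (hx x h).not_gt (by simpa using hδ)
  have hins : (↑(insert x s) : Set X) ⊆ A ∧
      (↑(insert x s) : Set X).Pairwise (δ ≤ dist · ·) := by
    rw [Finset.coe_insert, insert_subset_iff, pairwise_insert]
    exact ⟨⟨hxA, hsA⟩, hsep, fun c hc _ => ⟨hx c hc, dist_comm x c ▸ hx c hc⟩⟩
  simpa [Finset.card_insert_of_notMem hxs] using hmax _ hins

theorem Finset.card_mul_le_measure_of_pairwiseDisjoint {α ι : Type*} [MeasurableSpace α]
    {μ : Measure α} {s : Finset ι} {f : ι → Set α} {m : ℝ≥0∞} {U : Set α}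
    (hdisj : (s : Set ι).PairwiseDisjoint f) (hmeas : ∀ i ∈ s, MeasurableSet (f i))
    (hm : ∀ i ∈ s, m ≤ μ (f i)) (hU : ∀ i ∈ s, f i ⊆ U) :
    s.card * m ≤ μ U :=
  calc s.card * m ≤ ∑ i ∈ s, μ (f i) := by
        rw [← nsmul_eq_mul]; exact s.card_nsmul_le_sum _ _ hm
    _ = μ (⋃ i ∈ s, f i) := (measure_biUnion_finset hdisj hmeas).symm
    _ ≤ μ U := measure_mono (iUnion₂_subset hU)

theorem measure_diff_le_ofReal_sub {α : Type*} [MeasurableSpace α] {μ : Measure α}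
    {s t : Set α} {a b : ℝ} (hts : t ⊆ s) (ht : MeasurableSet t) (ha : 0 ≤ a)
    (hs : μ s ≤ ENNReal.ofReal b) (hta : ENNReal.ofReal a ≤ μ t) :
    μ (s \ t) ≤ ENNReal.ofReal (b - a) := by
  have ht_ne_top : μ t ≠ ∞ :=
    ne_top_of_le_ne_top ENNReal.ofReal_ne_top ((measure_mono hts).trans hs)
  rw [measure_sdiff hts ht.nullMeasurableSet ht_ne_top, ENNReal.ofReal_sub _ ha]
  exact tsub_le_tsub hs hta

theorem ball_subset_ball_diff_ball {X : Type*} [PseudoMetricSpace X] {p c : X} {r R ρ : ℝ}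
    (hc : c ∈ ball p R \ ball p r) : ball c ρ ⊆ ball p (R + ρ) \ ball p (r - ρ) := by
  intro x hx
  simp only [mem_sdiff, mem_ball, not_lt] at hc hx ⊢
  constructor
  · linarith [dist_triangle x c p]
  · linarith [dist_triangle_left c p x]

theorem ENNReal.natCast_le_div_of_mul_ofReal_le {k : ℕ} {x y : ℝ} (hx : 0 < x) (hy : 0 ≤ y)
    (h : k * ENNReal.ofReal x ≤ ENNReal.ofReal y) : (k : ℝ) ≤ y / x := by
  rwa [le_div_iff₀ hx, ← ENNReal.ofReal_le_ofReal_iff hy,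
    ENNReal.ofReal_mul (Nat.cast_nonneg _), ENNReal.ofReal_natCast]

def HasEuclideanVolumeBounds {X : Type*} [PseudoMetricSpace X] [MeasurableSpace X]
    (μ : Measure X) (n : ℕ) (v₀ V₀ : ℝ) : Prop :=
  ∀ (x : X) (r : ℝ), 0 < r →
    ENNReal.ofReal (v₀ * r ^ n) ≤ μ (ball x r) ∧ μ (ball x r) ≤ ENNReal.ofReal (V₀ * r ^ n)

namespace HasEuclideanVolumeBounds

variable {X : Type*} [PseudoMetricSpace X] [MeasurableSpace X] {μ : Measure X} {n : ℕ}
  {v₀ V₀ : ℝ}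

theorem measure_ball_le (h : HasEuclideanVolumeBounds μ n v₀ V₀) (x : X) (r : ℝ) :
    μ (ball x r) ≤ ENNReal.ofReal (V₀ * r ^ n) := by
  rcases lt_or_ge 0 r with hr | hr
  · exact (h x r hr).2
  · simp [ball_eq_empty.2 hr]

theorem ofReal_le_measure_ball (h : HasEuclideanVolumeBounds μ n v₀ V₀) (hn : n ≠ 0) (x : X)
    {r : ℝ} (hr : 0 ≤ r) : ENNReal.ofReal (v₀ * r ^ n) ≤ μ (ball x r) := by
  rcases hr.lt_or_eq with hr | rfl
  · exact (h x r hr).1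
  · simp [zero_pow hn]

theorem card_mul_le [OpensMeasurableSpace X] (h : HasEuclideanVolumeBounds μ n v₀ V₀)
    (hn : n ≠ 0) (hv₀ : 0 ≤ v₀) {p : X} {s : Finset X} {r R δ : ℝ} (hδ : 0 < δ)
    (hδr : δ ≤ 2 * r) (hrR : r ≤ R) (hs : ↑s ⊆ ball p R \ ball p r)
    (hsep : (s : Set X).Pairwise (δ ≤ dist · ·)) :
    s.card * ENNReal.ofReal (v₀ * (δ / 2) ^ n) ≤
      ENNReal.ofReal (V₀ * (R + δ / 2) ^ n - v₀ * (r - δ / 2) ^ n) := by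
  have hdisj : (s : Set X).PairwiseDisjoint (ball · (δ / 2)) := fun x hx y hy hxy =>
    ball_disjoint_ball (by linarith [hsep hx hy hxy])
  refine (Finset.card_mul_le_measure_of_pairwiseDisjoint hdisj (fun _ _ => measurableSet_ball)
    (fun c _ => h.ofReal_le_measure_ball hn c (by positivity))
    (fun c hc => ball_subset_ball_diff_ball (hs hc))).trans ?_
  exact measure_diff_le_ofReal_sub (ball_subset_ball (by linarith)) measurableSet_ball
    (mul_nonneg hv₀ (pow_nonneg (by linarith) n))
    (h.measure_ball_le p _) (h.ofReal_le_measure_ball hn p (by linarith))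

end HasEuclideanVolumeBounds

/-- Annulus covering lemma: in a metric-measure space with two-sided Euclidean
volume bounds `v₀ rⁿ ≤ μ(B_r(x)) ≤ V₀ rⁿ`, the annulus `B_{QR}(p) \ closure(B_R(p))`
can be covered by at most `v₀⁻¹ (2/α)ⁿ [V₀ (Q+α/2)ⁿ − v₀ (1−α/2)ⁿ]` balls of
radius `αR` centered in the annulus. -/
theorem annulus_covering
    {X : Type*} [MetricSpace X] [MeasurableSpace X] [BorelSpace X] (μ : Measure X)
    (n : ℕ) (hn : 1 ≤ n) (v₀ V₀ : ℝ) (hv₀ : 0 < v₀) (hvV : v₀ ≤ V₀)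
    (hvol : ∀ (x : X) (r : ℝ), 0 < r →
      ENNReal.ofReal (v₀ * r ^ n) ≤ μ (ball x r) ∧
      μ (ball x r) ≤ ENNReal.ofReal (V₀ * r ^ n))
    (p : X) (R Q α : ℝ) (hR : 0 < R) (hQ : 1 < Q)
    (hα : 0 < α) (hα' : α ≤ min 2 ((Q - 1) / 4)) :
    ∃ s : Finset X,
      (↑s : Set X) ⊆ ball p (Q * R) \ closure (ball p R) ∧
      ball p (Q * R) \ closure (ball p R) ⊆ ⋃ c ∈ s, ball c (α * R) ∧
      (s.card : ℝ) ≤ v₀⁻¹ * (2 / α) ^ n *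
        (V₀ * (Q + α / 2) ^ n - v₀ * (1 - α / 2) ^ n) := by
  have hα2 : α ≤ 2 := hα'.trans (min_le_left _ _)
  have hannulus : ball p (Q * R) \ closure (ball p R) ⊆ ball p (Q * R) \ ball p R :=
    sdiff_subset_sdiff_right subset_closure
  have hvolume_nonneg : 0 ≤ V₀ * (Q * R + α * R / 2) ^ n - v₀ * (R - α * R / 2) ^ n := by
    have hinner : 0 ≤ R - α * R / 2 := by nlinarith
    have : (R - α * R / 2) ^ n ≤ (Q * R + α * R / 2) ^ n :=
      pow_le_pow_left₀ hinner (by nlinarith) n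
    nlinarith [pow_nonneg hinner n]
  have hpacking : ∀ s : Finset X, ↑s ⊆ ball p (Q * R) \ closure (ball p R) →
      (s : Set X).Pairwise (α * R ≤ dist · ·) →
      (s.card : ℝ) ≤ v₀⁻¹ * (2 / α) ^ n * (V₀ * (Q + α / 2) ^ n - v₀ * (1 - α / 2) ^ n) := by
    intro s hs hsep
    have := HasEuclideanVolumeBounds.card_mul_le hvol (by omega) hv₀.le (by positivity)
      (by nlinarith) (by nlinarith) (hs.trans hannulus) hsep
    refine (ENNReal.natCast_le_div_of_mul_ofReal_le (by positivity) hvolume_nonneg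
      this).trans_eq ?_
    rw [show Q * R + α * R / 2 = (Q + α / 2) * R by ring,
      show R - α * R / 2 = (1 - α / 2) * R by ring, show α * R / 2 = α / 2 * R by ring,
      mul_pow, mul_pow, mul_pow, div_pow, div_pow]
    field_simp
  obtain ⟨s, hs, hsep, hcover⟩ := exists_separated_finset_subset_iUnion_ball
    (N := ⌊_⌋₊) (by positivity) fun s hs hsep => Nat.le_floor (hpacking s hs hsep)
  exact ⟨s, hs, hcover, hpacking s hs hsep⟩
end

section
/- Let X be a topological space, f : X → ℝ a continuous function, and γ : [0,1] → X a continuous curve. Let U₁, …, U_k be finitely many nonempty open subsets of X whose union contains the image γ([0,1]), and assume f is bounded on each U_i. Then |f(γ(0)) − f(γ(1))| ≤ Σ_{i=1}^{k} osc_{U_i} f, where osc_U f := sup_{x∈U} f(x) − inf_{x∈U} f(x). -/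
/-!
Fix `x` on a preconnected set `K` covered by open sets `Uᵢ` on which `f` oscillates by at most `dᵢ`.
Take a maximal set `s` of indices such that `|f x - f z| ≤ ∑_{i ∈ s} dᵢ` for every `z` in `⋃_{i ∈ s} Uᵢ`.
Any `Uₘ` with `m ∉ s` meeting this union could be added to `s` by the triangle inequality, so
`⋃_{i ∈ s} Uᵢ` and `⋃_{i ∉ s} Uᵢ` are disjoint open sets covering `K`; by preconnectedness the first one
contains all of `K`.
-/

open Set

section Chaining

universe u v

variable {X : Type u} {ι : Type v} (f : X → ℝ) (U : ι → Set X) (d : ι → ℝ)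

def ChainBounded (x : X) (s : Finset ι) : Prop :=
  ∀ i ∈ s, ∀ z ∈ U i, |f x - f z| ≤ ∑ j ∈ s, d j

variable {f U d}

theorem chainBounded_singleton (hd : ∀ i, ∀ a ∈ U i, ∀ b ∈ U i, |f a - f b| ≤ d i)
    {x : X} {i : ι} (hx : x ∈ U i) : ChainBounded f U d x {i} := by
  intro j hj z hz
  rw [Finset.mem_singleton] at hj
  rw [Finset.sum_singleton]
  exact hd i x hx z (hj ▸ hz)

theorem ChainBounded.insert [DecidableEq ι] (hd : ∀ i, ∀ a ∈ U i, ∀ b ∈ U i, |f a - f b| ≤ d i)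
    {x y : X} {s : Finset ι} (hs : ChainBounded f U d x s) {i m : ι} (hi : i ∈ s) (hm : m ∉ s)
    (hyi : y ∈ U i) (hym : y ∈ U m) : ChainBounded f U d x (insert m s) := by
  have hdm : 0 ≤ d m := (abs_nonneg _).trans (sub_self (f y) ▸ hd m y hym y hym)
  intro j hj z hz
  rw [Finset.sum_insert hm]
  rcases Finset.mem_insert.1 hj with rfl | hj
  · calc |f x - f z| ≤ |f x - f y| + |f y - f z| := abs_sub_le _ _ _
      _ ≤ ∑ k ∈ s, d k + d j := add_le_add (hs i hi y hyi) (hd j y hym z hz)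
      _ = d j + ∑ k ∈ s, d k := add_comm _ _
  · linarith [hs j hj z hz]

theorem ChainBounded.disjoint_of_maximal (hd : ∀ i, ∀ a ∈ U i, ∀ b ∈ U i, |f a - f b| ≤ d i)
    {x : X} {s : Finset ι} (hs : Maximal (ChainBounded f U d x) s) :
    Disjoint (⋃ i ∈ s, U i) (⋃ m ∉ s, U m) := by
  classical
  refine Set.disjoint_left.2 fun y hy hy' => ?_
  obtain ⟨i, hi, hyi⟩ := mem_iUnion₂.1 hy
  obtain ⟨m, hm, hym⟩ := mem_iUnion₂.1 hy'
  have := hs.2 (hs.1.insert hd hi hm hyi hym) (Finset.subset_insert m s)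
  exact hm (this (Finset.mem_insert_self m s))

theorem IsPreconnected.abs_sub_le_sum [TopologicalSpace X] [Fintype ι] {K : Set X}
    (hK : IsPreconnected K) (hU : ∀ i, IsOpen (U i)) (hKU : K ⊆ ⋃ i, U i)
    (hd : ∀ i, ∀ a ∈ U i, ∀ b ∈ U i, |f a - f b| ≤ d i) (hd₀ : ∀ i, 0 ≤ d i)
    {x y : X} (hx : x ∈ K) (hy : y ∈ K) : |f x - f y| ≤ ∑ i, d i := by
  obtain ⟨j, hxj⟩ := mem_iUnion.1 (hKU hx)
  obtain ⟨s, hjs, hs⟩ := Finite.exists_le_maximal (chainBounded_singleton hd hxj)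
  have hxs : x ∈ ⋃ i ∈ s, U i := mem_biUnion (Finset.singleton_subset_iff.1 hjs) hxj
  have hcover : K ⊆ (⋃ i ∈ s, U i) ∪ ⋃ m ∉ s, U m := fun z hz => by
    obtain ⟨i, hzi⟩ := mem_iUnion.1 (hKU hz)
    by_cases hi : i ∈ s
    exacts [Or.inl (mem_biUnion hi hzi), Or.inr (mem_biUnion hi hzi)]
  have hKs : K ⊆ ⋃ i ∈ s, U i :=
    hK.subset_left_of_subset_union (isOpen_biUnion fun i _ => hU i) (isOpen_biUnion fun m _ => hU m)
      (ChainBounded.disjoint_of_maximal hd hs) hcover ⟨x, hx, hxs⟩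
  obtain ⟨i, hi, hyi⟩ := mem_iUnion₂.1 (hKs hy)
  calc |f x - f y| ≤ ∑ i ∈ s, d i := hs.1 i hi y hyi
    _ ≤ ∑ i, d i := Finset.sum_le_sum_of_subset_of_nonneg s.subset_univ fun i _ _ => hd₀ i

theorem abs_sub_le_sSup_sub_sInf {V : Set X} (hV : BddAbove (f '' V)) (hV' : BddBelow (f '' V))
    {a b : X} (ha : a ∈ V) (hb : b ∈ V) : |f a - f b| ≤ sSup (f '' V) - sInf (f '' V) :=
  abs_sub_le_iff.2
    ⟨by linarith [le_csSup hV (mem_image_of_mem f ha), csInf_le hV' (mem_image_of_mem f hb)],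
      by linarith [le_csSup hV (mem_image_of_mem f hb), csInf_le hV' (mem_image_of_mem f ha)]⟩

end Chaining

theorem oscillation_chaining_general
    {X : Type*} [TopologicalSpace X] (f : X → ℝ)
    (γ : ℝ → X) (hγ : ContinuousOn γ (Icc 0 1))
    (k : ℕ) (U : Fin k → Set X)
    (hUopen : ∀ i, IsOpen (U i))
    (hcover : γ '' Icc 0 1 ⊆ ⋃ i, U i)
    (hbdd : ∀ i, BddAbove (f '' U i) ∧ BddBelow (f '' U i)) :
    |f (γ 0) - f (γ 1)| ≤ ∑ i : Fin k, (sSup (f '' U i) - sInf (f '' U i)) :=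
  (isPreconnected_Icc.image γ hγ).abs_sub_le_sum hUopen hcover
    (fun i _ ha _ hb => abs_sub_le_sSup_sub_sInf (hbdd i).1 (hbdd i).2 ha hb)
    (fun i => sub_nonneg.2 (Real.sInf_le_sSup _ (hbdd i).2 (hbdd i).1))
    (mem_image_of_mem γ ⟨le_rfl, zero_le_one⟩) (mem_image_of_mem γ ⟨zero_le_one, le_rfl⟩)

/-- Chaining lemma (Li–Tam): if a continuous curve `γ : [0,1] → X` is covered by
finitely many nonempty open sets `U₁, …, U_k` on each of which the continuous
function `f` is bounded, then `|f(γ(0)) − f(γ(1))| ≤ Σᵢ osc_{Uᵢ} f`, where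
`osc_U f = sup_U f − inf_U f`. -/
theorem oscillation_chaining
    {X : Type*} [TopologicalSpace X] (f : X → ℝ) (hf : Continuous f)
    (γ : ℝ → X) (hγ : ContinuousOn γ (Icc 0 1))
    (k : ℕ) (U : Fin k → Set X)
    (hUne : ∀ i, (U i).Nonempty) (hUopen : ∀ i, IsOpen (U i))
    (hcover : γ '' Icc 0 1 ⊆ ⋃ i, U i)
    (hbdd : ∀ i, BddAbove (f '' U i) ∧ BddBelow (f '' U i)) :
    |f (γ 0) - f (γ 1)| ≤ ∑ i : Fin k, (sSup (f '' U i) - sInf (f '' U i)) :=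
  oscillation_chaining_general f γ hγ k U hUopen hcover hbdd
end

section
/- Let n > 0 be a real number, r > 0, let y : [0,r] → ℝ be twice differentiable with y(t) > 0 for all t ∈ [0,r], and let F : [0,r] → ℝ be differentiable. Assume that the function t ↦ n y′(t)/y(t) is differentiable and satisfies (d/dt)(n y′(t)/y(t)) ≤ −(1/n) (n y′(t)/y(t) + F′(t))² for every t ∈ [0,r]. Then n y″(t) ≤ −2 F′(t) y′(t) for every t ∈ [0,r]. -/
open Set

/-!
Write `p = y'/y`. Since `(n p)' = n (y''/y - p²)`, the hypothesis reads
`n y''/y - n p² ≤ -(1/n)(n p + F')² = -n p² - 2 F' p - F'²/n`; the `n p²` terms cancel and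
dropping `-F'²/n ≤ 0` leaves `n y''/y ≤ -2 F' y'/y`, which is the claim after multiplying by `y > 0`.
-/

theorem HasDerivAt.const_mul_logDeriv {y y' : ℝ → ℝ} {y'' t : ℝ} (n : ℝ)
    (hy : HasDerivAt y (y' t) t) (hy' : HasDerivAt y' y'' t) (hyt : y t ≠ 0) :
    HasDerivAt (fun s => n * y' s / y s) (n * (y'' / y t - (y' t / y t) ^ 2)) t :=
  ((hy'.const_mul n).div hy hyt).congr_deriv (by field_simp)

theorem mul_le_of_riccati_le {n q p d : ℝ} (hn : 0 < n)
    (h : n * (q - p ^ 2) ≤ -(1 / n) * (n * p + d) ^ 2) :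
    n * q ≤ -2 * d * p := by
  have expand : -(1 / n) * (n * p + d) ^ 2 = -(n * p ^ 2) - 2 * d * p - d ^ 2 / n := by
    field_simp
    ring
  have : 0 ≤ d ^ 2 / n := by positivity
  linarith

theorem riccati_to_second_order_general
    (n r : ℝ) (hn : 0 < n)
    (y y' y'' F' : ℝ → ℝ)
    (hy : ∀ t ∈ Icc 0 r, HasDerivAt y (y' t) t)
    (hy' : ∀ t ∈ Icc 0 r, HasDerivAt y' (y'' t) t)
    (hypos : ∀ t ∈ Icc 0 r, 0 < y t)
    (hineq : ∀ t ∈ Icc 0 r,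
      deriv (fun s => n * y' s / y s) t ≤
        -(1 / n) * (n * y' t / y t + F' t) ^ 2) :
    ∀ t ∈ Icc 0 r, n * y'' t ≤ -2 * F' t * y' t := by
  intro t ht
  have hyt := hypos t ht
  have hderiv := (HasDerivAt.const_mul_logDeriv n (hy t ht) (hy' t ht) hyt.ne').deriv
  have hriccati := hineq t ht
  rw [hderiv, mul_div_assoc] at hriccati
  have hdiv : n * (y'' t / y t) ≤ -2 * F' t * (y' t / y t) := mul_le_of_riccati_le hn hriccati
  rwa [← mul_div_assoc, ← mul_div_assoc, div_le_div_iff_of_pos_right hyt] at hdiv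

/-- Riccati-type step in the Jacobian estimate: if `y > 0` is twice differentiable,
`F` is differentiable, and the function `t ↦ n y′(t)/y(t)` is differentiable with
`(n y′/y)′ ≤ −(1/n)(n y′/y + F′)²` on `[0,r]`, then `n y″ ≤ −2 F′ y′` on `[0,r]`. -/
theorem riccati_to_second_order
    (n r : ℝ) (hn : 0 < n) (hr : 0 < r)
    (y y' y'' F F' : ℝ → ℝ)
    (hy : ∀ t ∈ Icc 0 r, HasDerivAt y (y' t) t)
    (hy' : ∀ t ∈ Icc 0 r, HasDerivAt y' (y'' t) t)
    (hypos : ∀ t ∈ Icc 0 r, 0 < y t)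
    (hF : ∀ t ∈ Icc 0 r, HasDerivAt F (F' t) t)
    (hdiff : ∀ t ∈ Icc 0 r, DifferentiableAt ℝ (fun s => n * y' s / y s) t)
    (hineq : ∀ t ∈ Icc 0 r,
      deriv (fun s => n * y' s / y s) t ≤
        -(1 / n) * (n * y' t / y t + F' t) ^ 2) :
    ∀ t ∈ Icc 0 r, n * y'' t ≤ -2 * F' t * y' t :=
  riccati_to_second_order_general n r hn y y' y'' F' hy hy' hypos hineq
end

section
/- Let (X,d) be a metric space, μ a Borel measure on X, o ∈ X a fixed point, n ≥ 1 an integer, and D ≥ 1, ξ ≥ 1, β > 0 constants. Assume: (i) μ(B_R(x)) ≤ D (R/r)ⁿ μ(B_r(x)) for every x ∈ X and all 0 < r ≤ R ≤ d(x,o), and also for x = o and all 0 < r ≤ R; (ii) μ(B_r(o)) ≤ ξ μ(B_{r/2}(x)) for every r > 0 and every x ∈ X with d(x,o) = r; (iii) limsup_{r→∞} μ(B_r(o))/rⁿ ≥ β. Then μ(B_r(y)) ≥ (2ⁿ D² ξ)^{−1} β rⁿ for every y ∈ X and every r > 0. -/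
open Metric MeasureTheory Set Filter
open scoped ENNReal

/-!
Relative volume comparison at the pole, fed into the asymptotic volume ratio, gives
`μ(B_R(o)) ≥ (β / D) Rⁿ` for every `R`. For a point `y` at distance `s` from `o`, compare
`B_r(y)` with this: if `s ≤ r / 2` then `B_{r/2}(o) ⊆ B_r(y)`; otherwise condition (VC)
gives `μ(B_{s/2}(y)) ≥ μ(B_s(o)) / ξ`, which bounds `μ(B_r(y))` directly when `s / 2 ≤ r`,
and through relative volume comparison at `y` (valid since `s / 2 ≤ d(y, o)`) when `r < s / 2`.
-/

lemma ENNReal.ofReal_div_le_of_le_ofReal_mul {a c : ℝ} {m : ℝ≥0∞} (hc : 0 < c)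
    (h : ENNReal.ofReal a ≤ ENNReal.ofReal c * m) : ENNReal.ofReal (a / c) ≤ m := by
  rw [ENNReal.ofReal_div_of_pos hc]
  exact ENNReal.div_le_of_le_mul' h

lemma limsup_div_ofReal_pow_le {f : ℝ → ℝ≥0∞} {n : ℕ} {D R : ℝ} (hR : 0 < R)
    (hf : ∀ t, R ≤ t → f t ≤ ENNReal.ofReal (D * (t / R) ^ n) * f R) :
    limsup (fun t => f t / ENNReal.ofReal (t ^ n)) atTop ≤ ENNReal.ofReal (D / R ^ n) * f R := by
  refine limsup_le_of_le (by isBoundedDefault) ?_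
  filter_upwards [eventually_ge_atTop R] with t hRt
  refine ENNReal.div_le_of_le_mul ((hf t hRt).trans_eq ?_)
  rw [mul_right_comm, ← ENNReal.ofReal_mul' (pow_nonneg (hR.le.trans hRt) n), div_pow,
    div_mul_eq_mul_div, mul_div_assoc]

section

variable {X : Type*} [MetricSpace X] [MeasurableSpace X] {μ : Measure X} {o : X} {n : ℕ}

theorem ofReal_div_mul_pow_le_measure_ball_of_limsup {D β : ℝ} (hD : 0 < D)
    (hcomp : ∀ r R : ℝ, 0 < r → r ≤ R →
      μ (ball o R) ≤ ENNReal.ofReal (D * (R / r) ^ n) * μ (ball o r))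
    (hlim : ENNReal.ofReal β ≤
      limsup (fun r : ℝ => μ (ball o r) / ENNReal.ofReal (r ^ n)) atTop)
    {R : ℝ} (hR : 0 < R) : ENNReal.ofReal (β / D * R ^ n) ≤ μ (ball o R) := by
  have h := ENNReal.ofReal_div_le_of_le_ofReal_mul (by positivity)
    (hlim.trans (limsup_div_ofReal_pow_le hR fun t hRt => hcomp R t hR hRt))
  rwa [div_div_eq_mul_div, mul_div_right_comm] at h

variable {a r : ℝ} {y : X}

lemma ofReal_mul_pow_le_measure_ball_of_dist_le_half
    (hcenter : ∀ R, 0 < R → ENNReal.ofReal (a * R ^ n) ≤ μ (ball o R))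
    (hr : 0 < r) (hy : dist y o ≤ r / 2) :
    ENNReal.ofReal (a / 2 ^ n * r ^ n) ≤ μ (ball y r) := by
  have hsub : ball o (r / 2) ⊆ ball y r := fun z hz => by
    rw [mem_ball] at hz ⊢
    linarith [dist_triangle_right z y o]
  calc ENNReal.ofReal (a / 2 ^ n * r ^ n) = ENNReal.ofReal (a * (r / 2) ^ n) := by
        rw [div_pow, div_mul_eq_mul_div, mul_div_assoc]
    _ ≤ μ (ball o (r / 2)) := hcenter _ (half_pos hr)
    _ ≤ μ (ball y r) := measure_mono hsub

lemma ofReal_mul_pow_le_measure_ball_half_dist {ξ : ℝ} (hξ : 0 < ξ)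
    (hcenter : ∀ R, 0 < R → ENNReal.ofReal (a * R ^ n) ≤ μ (ball o R))
    (hVC : ∀ r : ℝ, 0 < r → ∀ x : X, dist x o = r →
      μ (ball o r) ≤ ENNReal.ofReal ξ * μ (ball x (r / 2)))
    (hy : 0 < dist y o) :
    ENNReal.ofReal (a / ξ * dist y o ^ n) ≤ μ (ball y (dist y o / 2)) := by
  rw [div_mul_eq_mul_div]
  exact ENNReal.ofReal_div_le_of_le_ofReal_mul hξ ((hcenter _ hy).trans (hVC _ hy y rfl))

lemma ofReal_mul_pow_le_measure_ball_of_half_dist_le (ha : 0 ≤ a) {ξ : ℝ} (hξ : 0 < ξ)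
    (hhalf : ENNReal.ofReal (a / ξ * dist y o ^ n) ≤ μ (ball y (dist y o / 2)))
    (hr : 0 < r) (hry : r / 2 < dist y o) (hyr : dist y o / 2 ≤ r) :
    ENNReal.ofReal (a / (2 ^ n * ξ) * r ^ n) ≤ μ (ball y r) := by
  refine le_trans ?_ (hhalf.trans (measure_mono (ball_subset_ball hyr)))
  refine ENNReal.ofReal_le_ofReal ?_
  calc a / (2 ^ n * ξ) * r ^ n = a / ξ * (r / 2) ^ n := by rw [div_pow]; field_simp
    _ ≤ a / ξ * dist y o ^ n := by gcongr

lemma ofReal_mul_pow_le_measure_ball_of_lt_half_dist {D ξ : ℝ} (hD : 0 < D) (hξ : 0 < ξ)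
    (hcomp : ∀ (x : X) (r R : ℝ), 0 < r → r ≤ R → R ≤ dist x o →
      μ (ball x R) ≤ ENNReal.ofReal (D * (R / r) ^ n) * μ (ball x r))
    (hhalf : ENNReal.ofReal (a / ξ * dist y o ^ n) ≤ μ (ball y (dist y o / 2)))
    (hr : 0 < r) (hry : r < dist y o / 2) :
    ENNReal.ofReal (2 ^ n * a / (D * ξ) * r ^ n) ≤ μ (ball y r) := by
  have hy : 0 < dist y o := by linarith
  have h := ENNReal.ofReal_div_le_of_le_ofReal_mul (by positivity)
    (hhalf.trans (hcomp y r _ hr hry.le (half_le_self hy.le)))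
  convert h using 2
  rw [div_pow, div_pow]
  field_simp

theorem ofReal_mul_pow_le_measure_ball (ha : 0 ≤ a) {D ξ : ℝ} (hD : 1 ≤ D) (hξ : 1 ≤ ξ)
    (hcenter : ∀ R, 0 < R → ENNReal.ofReal (a * R ^ n) ≤ μ (ball o R))
    (hcomp : ∀ (x : X) (r R : ℝ), 0 < r → r ≤ R → R ≤ dist x o →
      μ (ball x R) ≤ ENNReal.ofReal (D * (R / r) ^ n) * μ (ball x r))
    (hVC : ∀ r : ℝ, 0 < r → ∀ x : X, dist x o = r →
      μ (ball o r) ≤ ENNReal.ofReal ξ * μ (ball x (r / 2)))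
    (y : X) (hr : 0 < r) :
    ENNReal.ofReal (a / (2 ^ n * D * ξ) * r ^ n) ≤ μ (ball y r) := by
  have hD0 : 0 < D := one_pos.trans_le hD
  have hξ0 : 0 < ξ := one_pos.trans_le hξ
  have h2n : (1 : ℝ) ≤ 2 ^ n := one_le_pow₀ one_le_two
  have hweaken : ∀ {c : ℝ}, a / (2 ^ n * D * ξ) ≤ c →
      ENNReal.ofReal (c * r ^ n) ≤ μ (ball y r) →
      ENNReal.ofReal (a / (2 ^ n * D * ξ) * r ^ n) ≤ μ (ball y r) :=
    fun hc h => (ENNReal.ofReal_le_ofReal (by gcongr)).trans h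
  rcases le_or_gt (dist y o) (r / 2) with hnear | hrs
  · refine hweaken ?_ (ofReal_mul_pow_le_measure_ball_of_dist_le_half hcenter hr hnear)
    refine div_le_div_of_nonneg_left ha (by positivity) ?_
    rw [mul_assoc]
    exact le_mul_of_one_le_right (by positivity) (one_le_mul_of_one_le_of_one_le hD hξ)
  have hhalf := ofReal_mul_pow_le_measure_ball_half_dist hξ0 hcenter hVC (y := y) (by linarith)
  rcases le_or_gt (dist y o / 2) r with hmid | hfar
  · refine hweaken ?_ (ofReal_mul_pow_le_measure_ball_of_half_dist_le ha hξ0 hhalf hr hrs hmid)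
    refine div_le_div_of_nonneg_left ha (by positivity) ?_
    rw [mul_right_comm]
    exact le_mul_of_one_le_right (by positivity) hD
  · refine hweaken ?_ (ofReal_mul_pow_le_measure_ball_of_lt_half_dist hD0 hξ0 hcomp hhalf hr hfar)
    calc a / (2 ^ n * D * ξ) ≤ a / (D * ξ) := by
          refine div_le_div_of_nonneg_left ha (by positivity) ?_
          rw [mul_assoc]
          exact le_mul_of_one_le_left (by positivity) h2n
      _ ≤ 2 ^ n * a / (D * ξ) := by
          rw [mul_div_assoc]
          exact le_mul_of_one_le_left (by positivity) h2n

end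

theorem ahlfors_lower_bound_general
    {X : Type*} [MetricSpace X] [MeasurableSpace X] (μ : Measure X)
    (o : X) (n : ℕ) (D ξ β : ℝ) (hD : 1 ≤ D) (hξ : 1 ≤ ξ) (hβ : 0 < β)
    (hcomp : ∀ (x : X) (r R : ℝ), 0 < r → r ≤ R → R ≤ dist x o →
      μ (ball x R) ≤ ENNReal.ofReal (D * (R / r) ^ n) * μ (ball x r))
    (hcompo : ∀ r R : ℝ, 0 < r → r ≤ R →
      μ (ball o R) ≤ ENNReal.ofReal (D * (R / r) ^ n) * μ (ball o r))
    (hVC : ∀ r : ℝ, 0 < r → ∀ x : X, dist x o = r →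
      μ (ball o r) ≤ ENNReal.ofReal ξ * μ (ball x (r / 2)))
    (hAVR : ENNReal.ofReal β ≤
      limsup (fun r : ℝ => μ (ball o r) / ENNReal.ofReal (r ^ n)) atTop) :
    ∀ (y : X) (r : ℝ), 0 < r →
      ENNReal.ofReal ((2 ^ n * D ^ 2 * ξ)⁻¹ * β * r ^ n) ≤ μ (ball y r) := by
  intro y r hr
  have hD0 : 0 < D := one_pos.trans_le hD
  have hcenter (R : ℝ) (hR : 0 < R) : ENNReal.ofReal (β / D * R ^ n) ≤ μ (ball o R) :=
    ofReal_div_mul_pow_le_measure_ball_of_limsup hD0 hcompo hAVR hR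
  convert ofReal_mul_pow_le_measure_ball (div_nonneg hβ.le hD0.le) hD hξ hcenter hcomp hVC y hr
    using 3
  ring

/-- Lower-bound half of Lemma 4.2 (Ahlfors regularity): relative volume comparison
(i), the Li–Tam condition (VC) (ii), and positive asymptotic volume ratio (iii)
imply the uniform lower volume bound `μ(B_r(y)) ≥ (2ⁿ D² ξ)⁻¹ β rⁿ`. -/
theorem ahlfors_lower_bound
    {X : Type*} [MetricSpace X] [MeasurableSpace X] [BorelSpace X] (μ : Measure X)
    (o : X) (n : ℕ) (hn : 1 ≤ n) (D ξ β : ℝ) (hD : 1 ≤ D) (hξ : 1 ≤ ξ) (hβ : 0 < β)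
    (hcomp : ∀ (x : X) (r R : ℝ), 0 < r → r ≤ R → R ≤ dist x o →
      μ (ball x R) ≤ ENNReal.ofReal (D * (R / r) ^ n) * μ (ball x r))
    (hcompo : ∀ r R : ℝ, 0 < r → r ≤ R →
      μ (ball o R) ≤ ENNReal.ofReal (D * (R / r) ^ n) * μ (ball o r))
    (hVC : ∀ r : ℝ, 0 < r → ∀ x : X, dist x o = r →
      μ (ball o r) ≤ ENNReal.ofReal ξ * μ (ball x (r / 2)))
    (hAVR : ENNReal.ofReal β ≤
      limsup (fun r : ℝ => μ (ball o r) / ENNReal.ofReal (r ^ n)) atTop) :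
    ∀ (y : X) (r : ℝ), 0 < r →
      ENNReal.ofReal ((2 ^ n * D ^ 2 * ξ)⁻¹ * β * r ^ n) ≤ μ (ball y r) :=
  ahlfors_lower_bound_general μ o n D ξ β hD hξ hβ hcomp hcompo hVC hAVR
end

section
/- Let (X,d) be a metric space, μ a Borel measure on X, o ∈ X a fixed point, n ≥ 1 an integer, and D ≥ 1, V₁ > 0 constants. Assume: (i) μ(B_R(x)) ≤ D (R/r)ⁿ μ(B_r(x)) for every x ∈ X and all 0 < r ≤ R ≤ d(x,o), and also for x = o and all 0 < r ≤ R; (ii) limsup_{s→0⁺} μ(B_s(x))/sⁿ ≤ V₁ for every x ∈ X. Then μ(B_r(y)) ≤ 2ⁿ D V₁ rⁿ for every y ∈ X and every r > 0. -/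
open Metric MeasureTheory Set Filter

/-!
Near the base point, that is for `r ≤ d(y, o)`, the comparison (i) at `y` gives
`μ(B_r(y)) ≤ D rⁿ · μ(B_s(y)) / sⁿ` for every `0 < s ≤ r`, and letting `s → 0⁺` the density
bound (ii) turns this into `μ(B_r(y)) ≤ D V₁ rⁿ`. Far from it, `B_r(y) ⊆ B_{2r}(o)`, where the
same argument applies at `o` without any restriction on the radius and costs the factor `2ⁿ`.
-/

section

variable {X : Type*} [PseudoMetricSpace X] [MeasurableSpace X] {μ : Measure X} {x : X} {n : ℕ}

theorem measure_ball_le_of_comparison_of_limsup_density_le {D V R : ℝ} (hV : 0 ≤ V)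
    (hdensity : limsup (fun s : ℝ => μ (ball x s) / ENNReal.ofReal (s ^ n))
      (nhdsWithin 0 (Ioi 0)) ≤ ENNReal.ofReal V) (hR : 0 < R)
    (hcomp : ∀ s : ℝ, 0 < s → s ≤ R →
      μ (ball x R) ≤ ENNReal.ofReal (D * (R / s) ^ n) * μ (ball x s)) :
    μ (ball x R) ≤ ENNReal.ofReal (D * R ^ n * V) := by
  have hscaled : ∀ᶠ s in nhdsWithin (0 : ℝ) (Ioi 0),
      μ (ball x R) ≤ ENNReal.ofReal (D * R ^ n) * (μ (ball x s) / ENNReal.ofReal (s ^ n)) := by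
    filter_upwards [Ioc_mem_nhdsGT hR] with s ⟨hs, hsR⟩
    calc μ (ball x R) ≤ ENNReal.ofReal (D * (R / s) ^ n) * μ (ball x s) := hcomp s hs hsR
      _ = ENNReal.ofReal (D * R ^ n) * (μ (ball x s) / ENNReal.ofReal (s ^ n)) := by
        rw [div_pow, ← mul_div_assoc, ENNReal.ofReal_div_of_pos (by positivity),
          ← ENNReal.mul_div_right_comm, mul_div_assoc]
  calc μ (ball x R)
      ≤ limsup (fun s : ℝ => ENNReal.ofReal (D * R ^ n) * (μ (ball x s) / ENNReal.ofReal (s ^ n)))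
          (nhdsWithin 0 (Ioi 0)) := le_limsup_of_frequently_le' hscaled.frequently
    _ = ENNReal.ofReal (D * R ^ n) *
          limsup (fun s : ℝ => μ (ball x s) / ENNReal.ofReal (s ^ n)) (nhdsWithin 0 (Ioi 0)) :=
        ENNReal.limsup_const_mul_of_ne_top ENNReal.ofReal_ne_top
    _ ≤ ENNReal.ofReal (D * R ^ n) * ENNReal.ofReal V := by gcongr
    _ = ENNReal.ofReal (D * R ^ n * V) := (ENNReal.ofReal_mul' hV).symm

end

theorem ahlfors_upper_bound_general
    {X : Type*} [MetricSpace X] [MeasurableSpace X] (μ : Measure X)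
    (o : X) (n : ℕ) (D V₁ : ℝ) (hD : 1 ≤ D) (hV₁ : 0 < V₁)
    (hcomp : ∀ (x : X) (r R : ℝ), 0 < r → r ≤ R → R ≤ dist x o →
      μ (ball x R) ≤ ENNReal.ofReal (D * (R / r) ^ n) * μ (ball x r))
    (hcompo : ∀ r R : ℝ, 0 < r → r ≤ R →
      μ (ball o R) ≤ ENNReal.ofReal (D * (R / r) ^ n) * μ (ball o r))
    (hdensity : ∀ x : X,
      limsup (fun s : ℝ => μ (ball x s) / ENNReal.ofReal (s ^ n))
        (nhdsWithin 0 (Ioi 0)) ≤ ENNReal.ofReal V₁) :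
    ∀ (y : X) (r : ℝ), 0 < r →
      μ (ball y r) ≤ ENNReal.ofReal (2 ^ n * D * V₁ * r ^ n) := by
  intro y r hr
  rcases le_or_gt r (dist y o) with hnear | hfar
  · calc μ (ball y r) ≤ ENNReal.ofReal (D * r ^ n * V₁) :=
          measure_ball_le_of_comparison_of_limsup_density_le hV₁.le (hdensity y) hr
            fun s hs hsr => hcomp y s r hs hsr hnear
      _ ≤ ENNReal.ofReal (2 ^ n * D * V₁ * r ^ n) := by
          apply ENNReal.ofReal_le_ofReal
          have hbound : 0 ≤ D * V₁ * r ^ n :=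
            mul_nonneg (mul_nonneg (by linarith) hV₁.le) (pow_nonneg hr.le n)
          nlinarith [one_le_pow₀ (n := n) (one_le_two : (1 : ℝ) ≤ 2)]
  · calc μ (ball y r) ≤ μ (ball o (2 * r)) := measure_mono (ball_subset_ball' (by linarith))
      _ ≤ ENNReal.ofReal (D * (2 * r) ^ n * V₁) :=
          measure_ball_le_of_comparison_of_limsup_density_le hV₁.le (hdensity o) (by positivity)
            fun s hs hsr => hcompo s (2 * r) hs hsr
      _ = ENNReal.ofReal (2 ^ n * D * V₁ * r ^ n) := by rw [mul_pow]; ring_nf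

/-- Upper-bound half of Lemma 4.2 (Ahlfors regularity): relative volume comparison
(i) and the infinitesimal density bound (ii) imply the uniform upper volume bound
`μ(B_r(y)) ≤ 2ⁿ D V₁ rⁿ`. -/
theorem ahlfors_upper_bound
    {X : Type*} [MetricSpace X] [MeasurableSpace X] [BorelSpace X] (μ : Measure X)
    (o : X) (n : ℕ) (hn : 1 ≤ n) (D V₁ : ℝ) (hD : 1 ≤ D) (hV₁ : 0 < V₁)
    (hcomp : ∀ (x : X) (r R : ℝ), 0 < r → r ≤ R → R ≤ dist x o →
      μ (ball x R) ≤ ENNReal.ofReal (D * (R / r) ^ n) * μ (ball x r))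
    (hcompo : ∀ r R : ℝ, 0 < r → r ≤ R →
      μ (ball o R) ≤ ENNReal.ofReal (D * (R / r) ^ n) * μ (ball o r))
    (hdensity : ∀ x : X,
      limsup (fun s : ℝ => μ (ball x s) / ENNReal.ofReal (s ^ n))
        (nhdsWithin 0 (Ioi 0)) ≤ ENNReal.ofReal V₁) :
    ∀ (y : X) (r : ℝ), 0 < r →
      μ (ball y r) ≤ ENNReal.ofReal (2 ^ n * D * V₁ * r ^ n) :=
  ahlfors_upper_bound_general μ o n D V₁ hD hV₁ hcomp hcompo hdensity
end

section
/- Let (X,d) be a metric space, μ a Borel measure on X, p ∈ X, n ≥ 3 an integer, α > 3n a real number, and v₀ > 0 with μ(B_r(p)) ≤ v₀ rⁿ for every r > 0. Then ∫_X max{1, d(p,x)^{3n−2}} · d(p,x)^{2−n} · (1 + d(p,x)^{α})^{−1} dμ(x) ≤ C(n,α) v₀, where one may take C(n,α) = n/2 + (α−2n)/(α−3n). -/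
open Metric MeasureTheory Set Filter Topology

/-!
Off `p` the weight is at most `min (d^(2-n)) (d^(2n-α))` with `d = dist p x`. By the layer-cake
formula its integral is `∫₀^∞ μ {weight > t} dt`, and the superlevel set at height `t` lies in the
ball around `p` of radius `t^(-1/(α-2n))` for `t ≤ 1` and `t^(-1/(n-2))` for `t > 1`. The volume
bound turns these into `v₀ t^(-n/(α-2n))` and `v₀ t^(-n/(n-2))`, integrable on `(0,1]` and
`(1,∞)` because `α > 3n` and `n > 2`; the integrals are `(α-2n)/(α-3n)` and `(n-2)/2`.
-/

theorem max_one_rpow_mul_rpow_mul_inv_one_add_rpow_le {r a b c : ℝ} (hr : 0 < r)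
    (ha : 0 ≤ a) (hac : a ≤ c) :
    max 1 (r ^ a) * r ^ b * (1 + r ^ c)⁻¹ ≤ min (r ^ b) (r ^ (a + b - c)) := by
  rcases le_or_gt r 1 with hr1 | hr1
  · have hle : max 1 (r ^ a) * r ^ b * (1 + r ^ c)⁻¹ ≤ r ^ b := by
      rw [max_eq_left (Real.rpow_le_one hr.le hr1 ha), one_mul]
      exact mul_le_of_le_one_right (by positivity)
        (inv_le_one_of_one_le₀ (le_add_of_nonneg_right (by positivity)))
    exact le_min hle (hle.trans (Real.rpow_le_rpow_of_exponent_ge hr hr1 (by linarith)))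
  · have hle : max 1 (r ^ a) * r ^ b * (1 + r ^ c)⁻¹ ≤ r ^ (a + b - c) := by
      rw [max_eq_right (Real.one_le_rpow hr1.le ha)]
      calc r ^ a * r ^ b * (1 + r ^ c)⁻¹ ≤ r ^ a * r ^ b * r ^ (-c) := by
            rw [Real.rpow_neg hr.le]
            gcongr
            linarith
        _ = r ^ (a + b - c) := by rw [← Real.rpow_add hr, ← Real.rpow_add hr, sub_eq_add_neg]
    exact le_min (hle.trans (Real.rpow_le_rpow_of_exponent_le hr1.le (by linarith))) hle

theorem lintegral_Ioc_zero_one_ofReal_rpow {c : ℝ} (hc : -1 < c) :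
    ∫⁻ t in Ioc (0 : ℝ) 1, ENNReal.ofReal (t ^ c) = ENNReal.ofReal (1 / (c + 1)) := by
  rw [← ofReal_integral_eq_lintegral_ofReal (intervalIntegral.intervalIntegrable_rpow' hc).1
    ((ae_restrict_mem measurableSet_Ioc).mono fun t ht => Real.rpow_nonneg ht.1.le c),
    ← intervalIntegral.integral_of_le zero_le_one, integral_rpow (Or.inl hc),
    Real.one_rpow, Real.zero_rpow (by linarith), sub_zero]

theorem lintegral_Ioi_one_ofReal_rpow {c : ℝ} (hc : c < -1) :
    ∫⁻ t in Ioi (1 : ℝ), ENNReal.ofReal (t ^ c) = ENNReal.ofReal (-1 / (c + 1)) := by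
  rw [← ofReal_integral_eq_lintegral_ofReal (integrableOn_Ioi_rpow_of_lt hc one_pos)
    ((ae_restrict_mem measurableSet_Ioi).mono fun t ht =>
      Real.rpow_nonneg (zero_le_one.trans (le_of_lt ht)) c),
    integral_Ioi_rpow_of_lt hc one_pos, Real.one_rpow]

section VolumeGrowth

variable {X : Type*} [MetricSpace X] [MeasurableSpace X] {μ : Measure X} {p : X}
  {V : ENNReal} {s : ℝ}

theorem measure_singleton_eq_zero_of_measure_ball_le (hs : 0 < s) (hV : V ≠ ⊤)
    (hvol : ∀ r : ℝ, 0 < r → μ (ball p r) ≤ V * ENNReal.ofReal (r ^ s)) : μ {p} = 0 := by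
  have hlim : Tendsto (fun r : ℝ => V * ENNReal.ofReal (r ^ s)) (𝓝[>] 0) (𝓝 0) := by
    have h := ((ENNReal.continuous_ofReal.comp (Real.continuous_rpow_const hs.le)).tendsto
      (0 : ℝ)).mono_left (nhdsWithin_le_nhds (s := Ioi 0))
    simpa [Real.zero_rpow hs.ne'] using ENNReal.Tendsto.const_mul h (Or.inr hV)
  refine le_antisymm (ge_of_tendsto hlim ?_) zero_le
  filter_upwards [self_mem_nhdsWithin] with r hr
  exact (measure_mono (singleton_subset_iff.2 (mem_ball_self hr))).trans (hvol r hr)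

theorem measure_lt_dist_rpow_neg_le
    (hvol : ∀ r : ℝ, 0 < r → μ (ball p r) ≤ V * ENNReal.ofReal (r ^ s))
    {e t : ℝ} (he : 0 < e) (ht : 0 < t) :
    μ {x | t < dist p x ^ (-e)} ≤ V * ENNReal.ofReal (t ^ (-(s / e))) := by
  have hsub : {x | t < dist p x ^ (-e)} ⊆ ball p (t ^ (-e)⁻¹) := by
    intro x hx
    rw [mem_ball']
    rcases (dist_nonneg : 0 ≤ dist p x).eq_or_lt with h0 | h0
    · rw [← h0]; positivity
    · exact (Real.lt_rpow_inv_iff_of_neg h0 ht (by linarith)).2 hx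
  calc μ {x | t < dist p x ^ (-e)} ≤ V * ENNReal.ofReal ((t ^ (-e)⁻¹) ^ s) :=
        (measure_mono hsub).trans (hvol _ (by positivity))
    _ = V * ENNReal.ofReal (t ^ (-(s / e))) := by
        rw [← Real.rpow_mul ht.le]; congr 3; field_simp

variable [OpensMeasurableSpace X]

theorem lintegral_min_dist_rpow_neg_le
    (hvol : ∀ r : ℝ, 0 < r → μ (ball p r) ≤ V * ENNReal.ofReal (r ^ s))
    {a b : ℝ} (ha : 0 < a) (has : a < s) (hsb : s < b) :
    ∫⁻ x, ENNReal.ofReal (min (dist p x ^ (-a)) (dist p x ^ (-b))) ∂μ ≤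
      V * ENNReal.ofReal (a / (s - a) + b / (b - s)) := by
  set g : X → ℝ := fun x => min (dist p x ^ (-a)) (dist p x ^ (-b))
  have hnear (t : ℝ) (ht : t ∈ Ioc (0 : ℝ) 1) :
      μ {x | t < g x} ≤ V * ENNReal.ofReal (t ^ (-(s / b))) :=
    (measure_mono fun _ (hx : t < g _) => show _ < _ from hx.trans_le (min_le_right _ _)).trans
      (measure_lt_dist_rpow_neg_le hvol (ha.trans (has.trans hsb)) ht.1)
  have hfar (t : ℝ) (ht : t ∈ Ioi (1 : ℝ)) :
      μ {x | t < g x} ≤ V * ENNReal.ofReal (t ^ (-(s / a))) :=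
    (measure_mono fun _ (hx : t < g _) => show _ < _ from hx.trans_le (min_le_left _ _)).trans
      (measure_lt_dist_rpow_neg_le hvol ha (zero_lt_one.trans ht))
  have hcb : -1 < -(s / b) := by
    rw [neg_lt_neg_iff, div_lt_one (by linarith)]; exact hsb
  have hca : -(s / a) < -1 := by
    rw [neg_lt_neg_iff, one_lt_div ha]; exact has
  calc ∫⁻ x, ENNReal.ofReal (g x) ∂μ = ∫⁻ t in Ioi 0, μ {x | t < g x} :=
        lintegral_eq_lintegral_meas_lt μ (Eventually.of_forall fun x => by positivity)
          (by fun_prop)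
    _ = (∫⁻ t in Ioc 0 1, μ {x | t < g x}) + ∫⁻ t in Ioi 1, μ {x | t < g x} := by
        rw [← Ioc_union_Ioi_eq_Ioi zero_le_one,
          lintegral_union measurableSet_Ioi (Ioc_disjoint_Ioi le_rfl)]
    _ ≤ (∫⁻ t in Ioc 0 1, V * ENNReal.ofReal (t ^ (-(s / b)))) +
          ∫⁻ t in Ioi 1, V * ENNReal.ofReal (t ^ (-(s / a))) :=
        add_le_add (setLIntegral_mono (by fun_prop) hnear) (setLIntegral_mono (by fun_prop) hfar)
    _ = V * ENNReal.ofReal (a / (s - a) + b / (b - s)) := by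
        have hnear_val : 1 / (-(s / b) + 1) = b / (b - s) := by
          rw [neg_add_eq_sub, one_sub_div (by linarith), one_div_div]
        have hfar_val : -1 / (-(s / a) + 1) = a / (s - a) := by
          rw [neg_add_eq_sub, one_sub_div ha.ne', div_div_eq_mul_div, neg_one_mul, neg_div,
            ← div_neg, neg_sub]
        rw [lintegral_const_mul _ (by fun_prop), lintegral_const_mul _ (by fun_prop),
          lintegral_Ioc_zero_one_ofReal_rpow hcb, lintegral_Ioi_one_ofReal_rpow hca, hnear_val,
          hfar_val, ← mul_add, ← ENNReal.ofReal_add (div_nonneg (by linarith) (by linarith))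
          (div_nonneg ha.le (by linarith)), add_comm]

end VolumeGrowth

theorem kato_tail_integral_estimate_general
    {X : Type*} [MetricSpace X] [MeasurableSpace X] [BorelSpace X] (μ : Measure X)
    (p : X) (n : ℕ) (hn : 3 ≤ n) (α : ℝ) (hα : 3 * n < α)
    (v₀ : ℝ)
    (hvol : ∀ r : ℝ, 0 < r → μ (ball p r) ≤ ENNReal.ofReal (v₀ * r ^ n)) :
    ∫⁻ x, ENNReal.ofReal (max 1 (dist p x ^ (3 * (n : ℝ) - 2))) *
        ENNReal.ofReal (dist p x) ^ ((2 : ℝ) - n) *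
        ENNReal.ofReal ((1 + dist p x ^ α)⁻¹) ∂μ ≤
      ENNReal.ofReal ((n / 2 + (α - 2 * n) / (α - 3 * n)) * v₀) := by
  have hn' : (3 : ℝ) ≤ n := by exact_mod_cast hn
  have hvol' (r : ℝ) (hr : 0 < r) :
      μ (ball p r) ≤ ENNReal.ofReal v₀ * ENNReal.ofReal (r ^ (n : ℝ)) := by
    rw [Real.rpow_natCast, ← ENNReal.ofReal_mul' (by positivity)]
    exact hvol r hr
  have hp : μ {p} = 0 :=
    measure_singleton_eq_zero_of_measure_ball_le (by linarith) ENNReal.ofReal_ne_top hvol'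
  calc _ ≤ ∫⁻ x, ENNReal.ofReal
          (min (dist p x ^ (-((n : ℝ) - 2))) (dist p x ^ (-(α - 2 * n)))) ∂μ := by
        refine lintegral_mono_ae ?_
        filter_upwards [measure_eq_zero_iff_ae_notMem.1 hp] with x hx
        have hr : 0 < dist p x := dist_pos.2 (Ne.symm hx)
        rw [ENNReal.ofReal_rpow_of_pos hr, ← ENNReal.ofReal_mul (by positivity),
          ← ENNReal.ofReal_mul (by positivity)]
        refine ENNReal.ofReal_le_ofReal ((max_one_rpow_mul_rpow_mul_inv_one_add_rpow_le hr
          (by linarith) (by linarith)).trans_eq ?_)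
        congr 2 <;> ring
    _ ≤ ENNReal.ofReal v₀ *
          ENNReal.ofReal ((n - 2) / (n - (n - 2)) + (α - 2 * n) / (α - 2 * n - n)) :=
        lintegral_min_dist_rpow_neg_le hvol' (by linarith) (by linarith) (by linarith)
    _ ≤ ENNReal.ofReal ((n / 2 + (α - 2 * n) / (α - 3 * n)) * v₀) := by
        rw [mul_comm, ENNReal.ofReal_mul (add_nonneg (by positivity)
          (div_nonneg (by linarith) (by linarith))), sub_sub_cancel,
          show α - 2 * n - n = α - 3 * n by ring]
        gcongr
        linarith

/-- Tail integral estimate for Theorem 1.2(a): under the volume growth bound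
`μ(B_r(p)) ≤ v₀ rⁿ` and for `α > 3n`,
`∫_X max{1, d(p,x)^{3n−2}} d(p,x)^{2−n} (1 + d(p,x)^α)⁻¹ dμ ≤ (n/2 + (α−2n)/(α−3n)) v₀`.
The factor `d(p,x)^{2−n}` is the `ℝ≥0∞`-valued power, equal to `+∞` at `x = p`. -/
theorem kato_tail_integral_estimate
    {X : Type*} [MetricSpace X] [MeasurableSpace X] [BorelSpace X] (μ : Measure X)
    (p : X) (n : ℕ) (hn : 3 ≤ n) (α : ℝ) (hα : 3 * n < α)
    (v₀ : ℝ) (hv₀ : 0 < v₀)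
    (hvol : ∀ r : ℝ, 0 < r → μ (ball p r) ≤ ENNReal.ofReal (v₀ * r ^ n)) :
    ∫⁻ x, ENNReal.ofReal (max 1 (dist p x ^ (3 * (n : ℝ) - 2))) *
        ENNReal.ofReal (dist p x) ^ ((2 : ℝ) - n) *
        ENNReal.ofReal ((1 + dist p x ^ α)⁻¹) ∂μ ≤
      ENNReal.ofReal ((n / 2 + (α - 2 * n) / (α - 3 * n)) * v₀) :=
  kato_tail_integral_estimate_general μ p n hn α hα v₀ hvol
end

section
/- Let (X,d) be a metric space, μ a Borel measure on X, p ∈ X, n ≥ 3 an integer, and v₀ > 0 with μ(B_r(p)) ≤ v₀ rⁿ for every r > 0. Let λ : [0,∞) → [0,∞) be nonincreasing with b₀ := ∫₀^∞ s λ(s) ds < ∞. Then ∫_X λ(d(p,x)/2) · d(p,x)^{2−n} dμ(x) ≤ 8(n+1) v₀ b₀. -/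
open Metric MeasureTheory Set
open scoped ENNReal

/-!
The engine is a layer-cake comparison: if a measurable `f` on a measure space (Y, m) satisfies
m{f ≤ r} ≤ C r^k for all r ≥ 0, then every nonnegative antitone profile g has
∫ g(f) dm ≤ k C ∫₀^∞ s^{k-1} g(s) ds, because each superlevel set {g ∘ f > t} lies in a sublevel
set {f ≤ r} with g > t on (0, r). Applied to μ, f = d(p,·) and the profile s ↦ s^{2-n} 1_{s ≤ R},
it shows that ν := d(p,x)^{2-n} dμ satisfies ν(closedBall p R) ≤ (n/2) v₀ R²; applied to ν,
f = d(p,·)/2 and k = 2, it gives the bound 4 n v₀ b₀.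
-/

theorem measure_closedBall_le_of_forall_ball_le {X : Type*} [PseudoMetricSpace X]
    [MeasurableSpace X] (μ : Measure X) (p : X) {φ : ℝ → ℝ≥0∞} {R : ℝ}
    (hφ : ContinuousWithinAt φ (Ioi R) R) (h : ∀ r > R, μ (ball p r) ≤ φ r) :
    μ (closedBall p R) ≤ φ R :=
  ge_of_tendsto hφ <| eventually_nhdsWithin_of_forall fun r hr =>
    (measure_mono (closedBall_subset_ball hr)).trans (h r hr)

theorem lintegral_Ioc_rpow_sub_one {k r : ℝ} (hk : 0 < k) (hr : 0 ≤ r) :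
    ∫⁻ s in Ioc 0 r, ENNReal.ofReal (s ^ (k - 1)) = ENNReal.ofReal (r ^ k / k) := by
  have hint : IntegrableOn (fun s : ℝ => s ^ (k - 1)) (Ioc 0 r) :=
    (intervalIntegrable_iff_integrableOn_Ioc_of_le hr).mp
      (intervalIntegral.intervalIntegrable_rpow' (by linarith))
  rw [← ofReal_integral_eq_lintegral_ofReal hint
    (ae_restrict_of_forall_mem measurableSet_Ioc fun s hs => Real.rpow_nonneg hs.1.le _),
    ← intervalIntegral.integral_of_le hr, integral_rpow (Or.inl (by linarith)), sub_add_cancel,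
    Real.zero_rpow hk.ne', sub_zero]

section Comparison

variable {X : Type*} [MeasurableSpace X] {ν : Measure X} {ρ : Measure ℝ} {f : X → ℝ}
  {g : ℝ → ℝ}

theorem measure_lt_antitoneOn_comp_le (hg : AntitoneOn g (Ioi 0))
    (hνρ : ∀ r, 0 ≤ r → ν {x | f x ≤ r} ≤ ρ (Ioo 0 r)) (t : ℝ) :
    ν {x | t < g (f x)} ≤ ρ ({s | t < g s} ∩ Ioi 0) := by
  set T := {s | t < g s} ∩ Ioi 0
  have hT : ∀ s s', 0 < s → s < s' → s' ∈ T → s ∈ T := fun s s' hs hss' hs' =>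
    ⟨hs'.1.trans_le (hg hs (hs.trans hss') hss'.le), hs⟩
  by_cases hbdd : BddAbove T
  · set r := sSup (insert 0 T)
    have hbdd' : BddAbove (insert 0 T) := hbdd.insert 0
    have hr : 0 ≤ r := le_csSup hbdd' (mem_insert 0 T)
    have hsub : {x | t < g (f x)} ⊆ {x | f x ≤ r} := fun x hx => by
      rcases le_or_gt (f x) 0 with h | h
      · exact h.trans hr
      · exact le_csSup hbdd' (mem_insert_of_mem _ ⟨hx, h⟩)
    have hIoo : Ioo 0 r ⊆ T := fun s hs => by
      obtain ⟨s', hs', hss'⟩ := exists_lt_of_lt_csSup (insert_nonempty 0 T) hs.2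
      rcases hs' with rfl | hs'
      · exact absurd hs.1 hss'.not_gt
      · exact hT s s' hs.1 hss' hs'
    calc ν {x | t < g (f x)} ≤ ν {x | f x ≤ r} := measure_mono hsub
      _ ≤ ρ (Ioo 0 r) := hνρ r hr
      _ ≤ ρ T := measure_mono hIoo
  · have hIoi : Ioi 0 ⊆ T := fun s hs => by
      obtain ⟨s', hs', hss'⟩ := not_bddAbove_iff.mp hbdd s
      exact hT s s' hs hss' hs'
    have hcover : (⋃ m : ℕ, {x | f x ≤ m}) = univ :=
      eq_univ_of_forall fun x => mem_iUnion.mpr (exists_nat_ge (f x))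
    calc ν {x | t < g (f x)} ≤ ν (⋃ m : ℕ, {x | f x ≤ m}) := by
          rw [hcover]; exact measure_mono (subset_univ _)
      _ = ⨆ m : ℕ, ν {x | f x ≤ m} :=
          Monotone.measure_iUnion fun m m' h x (hx : f x ≤ m) =>
            hx.trans (by exact_mod_cast h)
      _ ≤ ρ T := iSup_le fun m =>
          (hνρ m m.cast_nonneg).trans (measure_mono (Ioo_subset_Ioi_self.trans hIoi))

theorem lintegral_antitoneOn_comp_le (hf : Measurable f) (hg : AntitoneOn g (Ioi 0))
    (hg0 : ∀ s ∈ Ioi 0, 0 ≤ g s) (hνρ : ∀ r, 0 ≤ r → ν {x | f x ≤ r} ≤ ρ (Ioo 0 r)) :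
    ∫⁻ x, ENNReal.ofReal (g (f x)) ∂ν ≤ ∫⁻ s in Ioi 0, ENNReal.ofReal (g s) ∂ρ := by
  have hpos : ∀ᵐ x ∂ν, f x ∈ Ioi 0 := by
    simpa [ae_iff] using hνρ 0 le_rfl
  have hmap : (ν.map f).restrict (Ioi 0) = ν.map f :=
    Measure.restrict_eq_self_of_ae_mem ((ae_map_iff hf.aemeasurable measurableSet_Ioi).mpr hpos)
  have hmeas : AEMeasurable (fun x => g (f x)) ν :=
    AEMeasurable.comp_aemeasurable (hmap ▸ aemeasurable_restrict_of_antitoneOn measurableSet_Ioi hg)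
      hf.aemeasurable
  rw [lintegral_eq_lintegral_meas_lt ν (hpos.mono fun x hx => hg0 _ hx) hmeas,
    lintegral_eq_lintegral_meas_lt _ (ae_restrict_of_forall_mem measurableSet_Ioi hg0)
      (aemeasurable_restrict_of_antitoneOn measurableSet_Ioi hg)]
  refine lintegral_mono fun t => ?_
  rw [Measure.restrict_apply' measurableSet_Ioi]
  exact measure_lt_antitoneOn_comp_le hg hνρ t

theorem lintegral_antitoneOn_comp_le_of_measure_le_rpow (hf : Measurable f)
    (hg : AntitoneOn g (Ioi 0)) (hg0 : ∀ s ∈ Ioi 0, 0 ≤ g s) {C k : ℝ} (hC : 0 ≤ C) (hk : 0 < k)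
    (hν : ∀ r, 0 ≤ r → ν {x | f x ≤ r} ≤ ENNReal.ofReal (C * r ^ k)) :
    ∫⁻ x, ENNReal.ofReal (g (f x)) ∂ν ≤
      ENNReal.ofReal (C * k) * ∫⁻ s in Ioi 0, ENNReal.ofReal (s ^ (k - 1) * g s) := by
  set d : ℝ → ℝ≥0∞ := fun s => ENNReal.ofReal (C * k) * ENNReal.ofReal (s ^ (k - 1))
  have hd : Measurable d :=
    measurable_const.mul (ENNReal.measurable_ofReal.comp (measurable_id.pow_const _))
  calc ∫⁻ x, ENNReal.ofReal (g (f x)) ∂ν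
      ≤ ∫⁻ s in Ioi 0, ENNReal.ofReal (g s) ∂volume.withDensity d := by
        refine lintegral_antitoneOn_comp_le hf hg hg0 fun r hr => ?_
        rw [withDensity_apply _ measurableSet_Ioo, setLIntegral_congr Ioo_ae_eq_Ioc,
          lintegral_const_mul' _ _ ENNReal.ofReal_ne_top, lintegral_Ioc_rpow_sub_one hk hr,
          ← ENNReal.ofReal_mul (by positivity)]
        convert hν r hr using 2
        field_simp
    _ = ∫⁻ s in Ioi 0, d s * ENNReal.ofReal (g s) :=
        setLIntegral_withDensity_eq_setLIntegral_mul_non_measurable _ hd _ measurableSet_Ioi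
          (ae_of_all _ fun s => ENNReal.mul_lt_top ENNReal.ofReal_lt_top ENNReal.ofReal_lt_top)
    _ = ENNReal.ofReal (C * k) * ∫⁻ s in Ioi 0, ENNReal.ofReal (s ^ (k - 1) * g s) := by
        rw [← lintegral_const_mul' _ _ ENNReal.ofReal_ne_top]
        refine setLIntegral_congr_fun measurableSet_Ioi fun s hs => ?_
        rw [mul_assoc, ENNReal.ofReal_mul (Real.rpow_nonneg (le_of_lt hs) _)]

end Comparison

theorem ae_dist_pos_of_measure_closedBall_zero {X : Type*} [PseudoMetricSpace X]
    [MeasurableSpace X] {μ : Measure X} {p : X} (h : μ (closedBall p 0) = 0) :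
    ∀ᵐ x ∂μ, 0 < dist p x :=
  ae_iff.mpr (measure_mono_null (fun _ hx => mem_closedBall'.mpr (not_lt.mp hx)) h)

theorem setLIntegral_closedBall_dist_rpow_neg_le {X : Type*} [PseudoMetricSpace X]
    [MeasurableSpace X] [OpensMeasurableSpace X] (μ : Measure X) (p : X) {N a v₀ : ℝ}
    (ha : 0 < a) (haN : a < N) (hv₀ : 0 ≤ v₀)
    (hμ : ∀ r, 0 ≤ r → μ (closedBall p r) ≤ ENNReal.ofReal (v₀ * r ^ N)) {R : ℝ} (hR : 0 ≤ R) :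
    ∫⁻ x in closedBall p R, ENNReal.ofReal (dist p x) ^ (-a) ∂μ ≤
      ENNReal.ofReal (N / (N - a) * v₀ * R ^ (N - a)) := by
  set h : ℝ → ℝ := fun s => if s ≤ R then s ^ (-a) else 0
  have hball : ∀ r, {x | dist p x ≤ r} = closedBall p r := fun r =>
    ext fun x => mem_closedBall'.symm
  have hh0 : ∀ s ∈ Ioi (0 : ℝ), 0 ≤ h s := fun s hs => by
    by_cases hsR : s ≤ R <;> simp [h, hsR, Real.rpow_nonneg (le_of_lt hs)]
  have hh : AntitoneOn h (Ioi 0) := fun s hs t ht hst => by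
    by_cases htR : t ≤ R
    · simp only [h, htR, hst.trans htR, if_true]
      exact Real.rpow_le_rpow_of_nonpos hs hst (by linarith)
    · simpa [h, htR] using hh0 s hs
  have hpos : ∀ᵐ x ∂μ, 0 < dist p x := ae_dist_pos_of_measure_closedBall_zero <| by
    simpa [Real.zero_rpow (show N ≠ 0 by linarith)] using hμ 0 le_rfl
  calc ∫⁻ x in closedBall p R, ENNReal.ofReal (dist p x) ^ (-a) ∂μ
      = ∫⁻ x, ENNReal.ofReal (h (dist p x)) ∂μ := by
        rw [← lintegral_indicator measurableSet_closedBall]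
        refine lintegral_congr_ae (hpos.mono fun x hx => ?_)
        by_cases hxR : dist p x ≤ R
        · rw [indicator_of_mem (mem_closedBall'.mpr hxR), ENNReal.ofReal_rpow_of_pos hx]
          simp [h, hxR]
        · rw [indicator_of_notMem (mt mem_closedBall'.mp hxR)]
          simp [h, hxR]
    _ ≤ ENNReal.ofReal (v₀ * N) * ∫⁻ s in Ioi 0, ENNReal.ofReal (s ^ (N - 1) * h s) :=
        lintegral_antitoneOn_comp_le_of_measure_le_rpow
          (continuous_const.dist continuous_id).measurable hh hh0 hv₀ (by linarith)
          fun r hr => hball r ▸ hμ r hr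
    _ = ENNReal.ofReal (v₀ * N) * ENNReal.ofReal (R ^ (N - a) / (N - a)) := by
        rw [← lintegral_Ioc_rpow_sub_one (by linarith) hR, ← Iic_inter_Ioi,
          ← setLIntegral_indicator measurableSet_Iic]
        refine congrArg _ (setLIntegral_congr_fun measurableSet_Ioi fun s hs => ?_)
        by_cases hsR : s ≤ R
        · simp only [h, hsR, if_true, indicator_of_mem (show s ∈ Iic R from hsR),
            ← Real.rpow_add hs]
          ring_nf
        · simp [h, hsR]
    _ = ENNReal.ofReal (N / (N - a) * v₀ * R ^ (N - a)) := by
        rw [← ENNReal.ofReal_mul (mul_nonneg hv₀ (by linarith))]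
        congr 1
        field_simp

theorem lintegral_antitoneOn_dist_div_two_mul_dist_rpow_le {X : Type*} [PseudoMetricSpace X]
    [MeasurableSpace X] [OpensMeasurableSpace X] (μ : Measure X) (p : X) {n v₀ : ℝ} (hn : 2 < n)
    (hv₀ : 0 ≤ v₀) (hμ : ∀ r, 0 ≤ r → μ (closedBall p r) ≤ ENNReal.ofReal (v₀ * r ^ n))
    {g : ℝ → ℝ} (hg : AntitoneOn g (Ioi 0)) (hg0 : ∀ s ∈ Ioi 0, 0 ≤ g s) :
    ∫⁻ x, ENNReal.ofReal (g (dist p x / 2)) * ENNReal.ofReal (dist p x) ^ (2 - n) ∂μ ≤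
      ENNReal.ofReal (4 * n * v₀) * ∫⁻ s in Ioi 0, ENNReal.ofReal (s * g s) := by
  set w : X → ℝ≥0∞ := fun x => ENNReal.ofReal (dist p x) ^ (2 - n)
  have hw : ∀ᵐ x ∂μ, w x < ∞ := by
    have hpos : ∀ᵐ x ∂μ, 0 < dist p x := ae_dist_pos_of_measure_closedBall_zero <| by
      simpa [Real.zero_rpow (show n ≠ 0 by linarith)] using hμ 0 le_rfl
    exact hpos.mono fun x hx => (ENNReal.rpow_ne_top_of_ne_zero
      (ENNReal.ofReal_pos.mpr hx).ne' ENNReal.ofReal_ne_top).lt_top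
  have hν : ∀ r, 0 ≤ r →
      μ.withDensity w {x | dist p x / 2 ≤ r} ≤ ENNReal.ofReal (2 * n * v₀ * r ^ (2 : ℝ)) := by
    intro r hr
    have hset : {x | dist p x / 2 ≤ r} = closedBall p (2 * r) :=
      ext fun x => by rw [mem_closedBall']; exact div_le_iff₀' (two_pos : (0 : ℝ) < 2)
    have := setLIntegral_closedBall_dist_rpow_neg_le μ p (a := n - 2) (by linarith) (by linarith)
      hv₀ hμ (by linarith : 0 ≤ 2 * r)
    rw [neg_sub, sub_sub_cancel, Real.mul_rpow zero_le_two hr] at this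
    rw [hset, withDensity_apply _ measurableSet_closedBall]
    convert this using 2
    ring
  calc ∫⁻ x, ENNReal.ofReal (g (dist p x / 2)) * w x ∂μ
      = ∫⁻ x, ENNReal.ofReal (g (dist p x / 2)) ∂μ.withDensity w := by
        rw [lintegral_withDensity_eq_lintegral_mul_non_measurable μ (by fun_prop) hw]
        simp only [Pi.mul_apply, mul_comm]
    _ ≤ ENNReal.ofReal (2 * n * v₀ * 2) *
          ∫⁻ s in Ioi 0, ENNReal.ofReal (s ^ ((2 : ℝ) - 1) * g s) :=
        lintegral_antitoneOn_comp_le_of_measure_le_rpow (by fun_prop) hg hg0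
          (by positivity) two_pos hν
    _ = ENNReal.ofReal (4 * n * v₀) * ∫⁻ s in Ioi 0, ENNReal.ofReal (s * g s) := by
        rw [show (2 : ℝ) - 1 = 1 by norm_num]
        simp only [Real.rpow_one]
        congr 2
        ring

/-- Tail estimate for Theorem 1.2(b): if `μ(B_r(p)) ≤ v₀ rⁿ` for all `r > 0`,
`n ≥ 3`, and `λ : [0,∞) → [0,∞)` is nonincreasing with `b₀ = ∫₀^∞ s λ(s) ds < ∞`,
then `∫_X λ(d(p,x)/2) d(p,x)^{2−n} dμ(x) ≤ 8(n+1) v₀ b₀`. The factor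
`d(p,x)^{2−n}` is the `ℝ≥0∞`-valued power, equal to `+∞` at `x = p`. -/
theorem kato_tail_estimate_asymp_nonneg
    {X : Type*} [MetricSpace X] [MeasurableSpace X] [BorelSpace X] (μ : Measure X)
    (p : X) (n : ℕ) (hn : 3 ≤ n) (v₀ : ℝ) (hv₀ : 0 < v₀)
    (hvol : ∀ r : ℝ, 0 < r → μ (ball p r) ≤ ENNReal.ofReal (v₀ * r ^ n))
    (lam : ℝ → ℝ) (hmono : AntitoneOn lam (Ici 0)) (hnonneg : ∀ s ∈ Ici (0 : ℝ), 0 ≤ lam s)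
    (hint : IntegrableOn (fun s => s * lam s) (Ioi 0))
    (b₀ : ℝ) (hb₀ : b₀ = ∫ s in Ioi (0 : ℝ), s * lam s) :
    ∫⁻ x, ENNReal.ofReal (lam (dist p x / 2)) *
        ENNReal.ofReal (dist p x) ^ ((2 : ℝ) - n) ∂μ ≤
      ENNReal.ofReal (8 * (n + 1) * v₀ * b₀) := by
  have hn2 : (2 : ℝ) < n := by exact_mod_cast hn
  have hμ : ∀ r, 0 ≤ r → μ (closedBall p r) ≤ ENNReal.ofReal (v₀ * r ^ (n : ℝ)) :=
    fun r _ => Real.rpow_natCast r n ▸ measure_closedBall_le_of_forall_ball_le μ p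
      (ENNReal.continuous_ofReal.comp (by fun_prop)).continuousWithinAt
      fun s hs => hvol s (by linarith)
  have hb₀' : ENNReal.ofReal b₀ = ∫⁻ s in Ioi 0, ENNReal.ofReal (s * lam s) := by
    rw [hb₀, ofReal_integral_eq_lintegral_ofReal hint (ae_restrict_of_forall_mem
      measurableSet_Ioi fun s hs => mul_nonneg (le_of_lt hs) (hnonneg s (Ioi_subset_Ici_self hs)))]
  calc _ ≤ ENNReal.ofReal (4 * n * v₀) * ENNReal.ofReal b₀ := hb₀' ▸
        lintegral_antitoneOn_dist_div_two_mul_dist_rpow_le μ p hn2 hv₀.le hμ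
          (hmono.mono Ioi_subset_Ici_self) fun s hs => hnonneg s (Ioi_subset_Ici_self hs)
    _ ≤ ENNReal.ofReal (8 * (n + 1) * v₀) * ENNReal.ofReal b₀ := by
        gcongr ENNReal.ofReal ?_ * _
        nlinarith
    _ = ENNReal.ofReal (8 * (n + 1) * v₀ * b₀) := (ENNReal.ofReal_mul (by positivity)).symm
end
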